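/- Fix a linear order on the edges of G. If τ is a nontrivial subtree of G with vertex set V_τ, then the minimal-tree fixed-point condition μ(τ) = τ holds if and only if for every edge {x,y} ∈ E|_{V_τ} \ E_τ, the edge {x,y} is not the maximal element of the set {{x,y}} ∪ {e : e on the path in τ from x to y}; equivalently, τ contains no broken circuit of G. -/
import Mathlib

attribute [-instance] Sym2.instPartialOrder


open scoped Classical

namespace BC

variable {V : Type*}

/-- The set of vertices incident to at least one edge of `τ`. -/
noncomputable def supp [Fintype V] (τ : Finset (Sym2 V)) : Finset V :=
  Finset.univ.filter (fun v => ∃ e ∈ τ, v ∈ e)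

/-- The graph on vertex set `R` with edge set `F` is connected. -/
def ConnOn (R : Finset V) (F : Finset (Sym2 V)) : Prop :=
  (SimpleGraph.induce (R : Set V) (SimpleGraph.fromEdgeSet (F : Set (Sym2 V)))).Connected

/-- Edges of `G` with both endpoints in `R` (edge set of the induced subgraph `G|_R`). -/
noncomputable def edgesIn [Fintype V] [DecidableEq V] (G : SimpleGraph V) [DecidableRel G.Adj]
    (R : Finset V) : Finset (Sym2 V) :=
  G.edgeFinset.filter (fun e => ∀ v ∈ e, v ∈ R)

/-- `g` is (the edge set of) a connected spanning subgraph of `G|_R`. -/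
def IsCSS [Fintype V] [DecidableEq V] (G : SimpleGraph V) [DecidableRel G.Adj]
    (R : Finset V) (g : Finset (Sym2 V)) : Prop :=
  g ⊆ edgesIn G R ∧ ConnOn R g

/-- `τ` is (the edge set of) a spanning tree of `G|_R`. -/
def IsSpanningTree [Fintype V] [DecidableEq V] (G : SimpleGraph V) [DecidableRel G.Adj]
    (R : Finset V) (τ : Finset (Sym2 V)) : Prop :=
  IsCSS G R τ ∧ τ.card = R.card - 1

/-- A forest: an edge set containing no cycle. -/
def IsForest (F : Finset (Sym2 V)) : Prop :=
  (SimpleGraph.fromEdgeSet (F : Set (Sym2 V))).IsAcyclic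

/-- `τ` is the edge set of a nontrivial tree component of the forest `F`. -/
def IsTreeComponent [Fintype V] (F τ : Finset (Sym2 V)) : Prop :=
  τ ⊆ F ∧ τ.Nonempty ∧ ConnOn (supp τ) τ ∧ ∀ e ∈ F \ τ, ∀ v ∈ e, v ∉ supp τ

/-- `C` is the edge set of a simple circuit (cycle) of `G`. -/
def IsCircuit (G : SimpleGraph V) (C : Finset (Sym2 V)) : Prop :=
  ∃ (v : V) (w : G.Walk v v), w.IsCycle ∧ w.edges.toFinset = C

/-- `B` is a broken circuit of `G`: a simple circuit minus its maximal edge. -/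
def IsBrokenCircuit [LinearOrder (Sym2 V)] (G : SimpleGraph V) (B : Finset (Sym2 V)) : Prop :=
  ∃ C e, IsCircuit G C ∧ e ∈ C ∧ (∀ f ∈ C, f ≤ e) ∧ B = C.erase e

/-- `m` is a partition scheme in `G`. -/
def IsPartitionScheme [Fintype V] [DecidableEq V] (G : SimpleGraph V) [DecidableRel G.Adj]
    (m : Finset (Sym2 V) → Finset (Sym2 V)) : Prop :=
  ∀ R : Finset V, 2 ≤ R.card → ConnOn R (edgesIn G R) →
    (∀ τ, IsSpanningTree G R τ → τ ⊆ m τ ∧ IsCSS G R (m τ)) ∧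
    (∀ g, IsCSS G R g → ∃! τ, IsSpanningTree G R τ ∧ τ ⊆ g ∧ g ⊆ m τ)

/-- The minimal-tree partition scheme: `μ(τ)` adds to `τ` every edge `{x,y}` of `G|_R`
larger than all the edges on the path in `τ` from `x` to `y`. -/
noncomputable def mu [Fintype V] [DecidableEq V] (G : SimpleGraph V) [DecidableRel G.Adj]
    [LinearOrder (Sym2 V)] (R : Finset V) (τ : Finset (Sym2 V)) : Finset (Sym2 V) :=
  τ ∪ (edgesIn G R).filter (fun e => e ∉ τ ∧ ∀ x y : V, e = s(x, y) →
    ∀ p : (SimpleGraph.fromEdgeSet (τ : Set (Sym2 V))).Walk x y, p.IsPath → ∀ f ∈ p.edges, f < e)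

/-- All unordered pairs of distinct elements of `R`. -/
noncomputable def allPairs [DecidableEq V] (R : Finset V) : Finset (Sym2 V) :=
  ((R ×ˢ R).filter (fun p => p.1 ≠ p.2)).image (fun p => s(p.1, p.2))

/-- `f` takes the same value at the two endpoints of `e`. -/
def eqOn (f : V → ℕ) (e : Sym2 V) : Prop :=
  Sym2.lift ⟨fun x y => f x = f y, fun x y => propext ⟨Eq.symm, Eq.symm⟩⟩ e

lemma toFinset_congr {α : Type*} (i1 i2 : DecidableEq α) (l : List α) :
    @List.toFinset α i1 l = @List.toFinset α i2 l := by
  cases Subsingleton.elim i1 i2; rfl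

lemma erase_congr {α : Type*} (i1 i2 : DecidableEq α) (s : Finset α) (e : α) :
    @Finset.erase α i1 s e = @Finset.erase α i2 s e := by
  cases Subsingleton.elim i1 i2; rfl

lemma start_mem_supp [Fintype V] {τ : Finset (Sym2 V)} {x y : V}
    (q : (SimpleGraph.fromEdgeSet (τ : Set (Sym2 V))).Walk x y) (hxy : x ≠ y) :
    x ∈ supp τ := by
  cases q with
  | nil => exact absurd rfl hxy
  | @cons _ z _ h _ =>
    rw [SimpleGraph.fromEdgeSet_adj] at h
    simp only [supp, Finset.mem_filter, Finset.mem_univ, true_and]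
    exact ⟨s(x, z), by exact_mod_cast h.1, by simp⟩


lemma edgeSet_eq [Fintype V] {G : SimpleGraph V} [DecidableRel G.Adj] {τ : Finset (Sym2 V)}
    (hτE : τ ⊆ G.edgeFinset) :
    (SimpleGraph.fromEdgeSet (τ : Set (Sym2 V))).edgeSet = (τ : Set (Sym2 V)) := by
  rw [SimpleGraph.edgeSet_fromEdgeSet]
  ext f
  simp only [Set.mem_diff, Finset.mem_coe, Set.mem_setOf_eq, and_iff_left_iff_imp]
  intro hf
  exact G.not_isDiag_of_mem_edgeSet (by simpa using hτE hf)

theorem test1 [Fintype V] [DecidableEq V] (G : SimpleGraph V)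
    [DecidableRel G.Adj] [LinearOrder (Sym2 V)] (τ : Finset (Sym2 V))
    (hτE : τ ⊆ G.edgeFinset)
    (hforest : (SimpleGraph.fromEdgeSet (τ : Set (Sym2 V))).IsAcyclic)
    (hconn : ConnOn (supp τ) τ) :
    mu G (supp τ) τ = τ ↔
      ∀ e ∈ edgesIn G (supp τ) \ τ, ∀ x y : V, e = s(x, y) →
        ∀ p : (SimpleGraph.fromEdgeSet (τ : Set (Sym2 V))).Walk x y, p.IsPath →
          ¬ (∀ f ∈ p.edges, f ≤ e) := by
  constructor
  · intro hmu e he x y hxy p hp hle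
    rw [Finset.mem_sdiff] at he
    have heτ : e ∉ τ := he.2
    -- the filter predicate holds for e
    have hpred : ∀ x' y' : V, e = s(x', y') →
        ∀ p' : (SimpleGraph.fromEdgeSet (τ : Set (Sym2 V))).Walk x' y', p'.IsPath →
          ∀ f ∈ p'.edges, f < e := by
      intro x' y' hxy' p' hp' f hf
      have hfτ : f ∈ τ := by
        have := p'.edges_subset_edgeSet hf
        rw [edgeSet_eq hτE] at this
        exact this
      have hfe : f ≠ e := fun h => heτ (h ▸ hfτ)
      refine lt_of_le_of_ne ?_ hfe
      -- f ∈ p'.edges implies f ∈ p.edges by uniqueness of paths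
      have hmem : f ∈ p.edges := by
        rw [hxy] at hxy'
        rw [Sym2.eq_iff] at hxy'
        rcases hxy' with ⟨rfl, rfl⟩ | ⟨rfl, rfl⟩
        · have := hforest.path_unique ⟨p', hp'⟩ ⟨p, hp⟩
          have h2 : p'.edges = p.edges := congrArg (fun q => q.val.edges) this
          rwa [h2] at hf
        · have := hforest.path_unique ⟨p', hp'⟩ ⟨p.reverse, hp.reverse⟩
          have h2 : p'.edges = p.reverse.edges := congrArg (fun q => q.val.edges) this
          rw [h2, SimpleGraph.Walk.edges_reverse, List.mem_reverse] at hf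
          exact hf
      exact hle f hmem
    have hemu : e ∈ mu G (supp τ) τ :=
      Finset.mem_union_right _ (Finset.mem_filter.2 ⟨he.1, heτ, hpred⟩)
    rw [hmu] at hemu
    exact heτ hemu
  · intro h
    apply Finset.Subset.antisymm _ Finset.subset_union_left
    intro e he
    rcases Finset.mem_union.1 he with h1 | h1
    · exact h1
    rw [Finset.mem_filter] at h1
    obtain ⟨hin, heτ, hpred⟩ := h1
    exfalso
    induction e using Sym2.ind with | _ x y =>
    have hadj : G.Adj x y := by
      have := (Finset.mem_filter.1 hin).1
      exact SimpleGraph.mem_edgeFinset.1 this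
    have hxs : x ∈ (supp τ : Set V) := by
      have := (Finset.mem_filter.1 hin).2 x (by simp)
      simpa using this
    have hys : y ∈ (supp τ : Set V) := by
      have := (Finset.mem_filter.1 hin).2 y (by simp)
      simpa using this
    obtain ⟨q⟩ := SimpleGraph.Connected.preconnected hconn ⟨x, hxs⟩ ⟨y, hys⟩
    let emb := SimpleGraph.Embedding.induce
      (G := SimpleGraph.fromEdgeSet (τ : Set (Sym2 V))) ((supp τ : Set V))
    have q' : (SimpleGraph.fromEdgeSet (τ : Set (Sym2 V))).Walk x y := q.map emb.toHom
    exact h s(x, y) (Finset.mem_sdiff.2 ⟨hin, heτ⟩) x y rfl q'.toPath q'.toPath.2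
      (fun f hf => le_of_lt (hpred x y rfl q'.toPath q'.toPath.2 f hf))

theorem test2 [Fintype V] [DecidableEq V] (G : SimpleGraph V)
    [DecidableRel G.Adj] [LinearOrder (Sym2 V)] (τ : Finset (Sym2 V))
    (hτE : τ ⊆ G.edgeFinset)
    (hB : ∀ B C e, (∃ (v : V) (w : G.Walk v v), w.IsCycle ∧ w.edges.toFinset = C) → e ∈ C →
        (∀ f ∈ C, f ≤ e) → B = C.erase e → ¬ B ⊆ τ) :
      ∀ e ∈ edgesIn G (supp τ) \ τ, ∀ x y : V, e = s(x, y) →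
        ∀ p : (SimpleGraph.fromEdgeSet (τ : Set (Sym2 V))).Walk x y, p.IsPath →
          ¬ (∀ f ∈ p.edges, f ≤ e) := by
  intro e he x y hxy p hp hle
  subst hxy
  rw [Finset.mem_sdiff] at he
  have hadj : G.Adj x y := SimpleGraph.mem_edgeFinset.1 (Finset.mem_filter.1 he.1).1
  have hpτ : ∀ f ∈ p.edges, f ∈ τ := by
    intro f hf
    have := p.edges_subset_edgeSet hf
    rw [edgeSet_eq hτE] at this
    exact this
  have hpG : ∀ f ∈ p.edges, f ∈ G.edgeSet := by
    intro f hf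
    simpa using hτE (hpτ f hf)
  set p' := p.transfer G hpG with hp'def
  have hp' : p'.IsPath := hp.transfer hpG
  have hp'edges : p'.edges = p.edges := p.edges_transfer hpG
  have hnot : s(y, x) ∉ p'.edges := by
    rw [hp'edges, Sym2.eq_swap]
    intro h
    exact he.2 (hpτ _ h)
  have hcyc : (SimpleGraph.Walk.cons hadj.symm p').IsCycle :=
    (SimpleGraph.Walk.cons_isCycle_iff p' hadj.symm).2 ⟨hp', hnot⟩
  set w := SimpleGraph.Walk.cons hadj.symm p' with hwdef
  set C := w.edges.toFinset with hCdef
  have heC : s(x, y) ∈ C := by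
    rw [hCdef, hwdef, SimpleGraph.Walk.edges_cons, List.toFinset_cons]
    rw [Sym2.eq_swap]
    exact Finset.mem_insert_self _ _
  have hmax : ∀ f ∈ C, f ≤ s(x, y) := by
    intro f hf
    rw [hCdef, hwdef, SimpleGraph.Walk.edges_cons, List.toFinset_cons, Finset.mem_insert] at hf
    rcases hf with rfl | hf
    · rw [Sym2.eq_swap]
    · exact hle f (by rwa [List.mem_toFinset, hp'edges] at hf)
  refine hB (C.erase s(x, y)) C s(x, y) ⟨y, w, hcyc, rfl⟩ heC hmax rfl ?_
  intro f hf
  rw [Finset.mem_erase] at hf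
  obtain ⟨hfe, hfC⟩ := hf
  rw [hCdef, hwdef, SimpleGraph.Walk.edges_cons, List.toFinset_cons, Finset.mem_insert] at hfC
  rcases hfC with rfl | hfC
  · exact absurd (Sym2.eq_swap) hfe
  · exact hpτ f (by rwa [List.mem_toFinset, hp'edges] at hfC)

theorem test [Fintype V] [DecidableEq V] (G : SimpleGraph V)
    [DecidableRel G.Adj] [LinearOrder (Sym2 V)] (τ : Finset (Sym2 V))
    (hτE : τ ⊆ G.edgeFinset) (hne : τ.Nonempty)
    (hforest : (SimpleGraph.fromEdgeSet (τ : Set (Sym2 V))).IsAcyclic)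
    (hconn : ConnOn (supp τ) τ) :
      (∀ e ∈ edgesIn G (supp τ) \ τ, ∀ x y : V, e = s(x, y) →
        ∀ p : (SimpleGraph.fromEdgeSet (τ : Set (Sym2 V))).Walk x y, p.IsPath →
          ¬ (∀ f ∈ p.edges, f ≤ e)) →
      ∀ B C e, (∃ (v : V) (w : G.Walk v v), w.IsCycle ∧ w.edges.toFinset = C) → e ∈ C →
        (∀ f ∈ C, f ≤ e) → B = C.erase e → ¬ B ⊆ τ := by
  intro hA B C e hC heC hmax hBe hBτ
  subst hBe
  obtain ⟨v, w, hw, rfl⟩ := hC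
  induction e using Sym2.ind with | _ x y =>
  rw [List.mem_toFinset] at heC
  have hadj : G.Adj x y := w.adj_of_mem_edges heC
  -- e ∉ τ
  have heτ : s(x, y) ∉ τ := by
    intro hin
    have hall : ∀ f ∈ w.edges, f ∈ (SimpleGraph.fromEdgeSet (τ : Set (Sym2 V))).edgeSet := by
      intro f hf
      rw [edgeSet_eq hτE]
      rcases eq_or_ne f s(x, y) with rfl | hne'
      · exact hin
      · exact hBτ (Finset.mem_erase.2 ⟨hne', List.mem_toFinset.2 hf⟩)
    exact hforest (w.transfer _ hall) (hw.transfer hall)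
  -- cycle in fromEdgeSet C
  set C : Finset (Sym2 V) := w.edges.toFinset with hCdef
  have hallC : ∀ f ∈ w.edges, f ∈ (SimpleGraph.fromEdgeSet (C : Set (Sym2 V))).edgeSet := by
    intro f hf
    rw [SimpleGraph.edgeSet_fromEdgeSet]
    refine ⟨by rw [Finset.mem_coe, hCdef, List.mem_toFinset]; exact hf, ?_⟩
    exact G.not_isDiag_of_mem_edgeSet (w.edges_subset_edgeSet hf)
  have hcyc' : ((w.transfer _ hallC)).IsCycle := hw.transfer hallC
  have hmem' : s(x, y) ∈ (w.transfer _ hallC).edges := by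
    rw [SimpleGraph.Walk.edges_transfer]; exact heC
  have hreach := (SimpleGraph.adj_and_reachable_delete_edges_iff_exists_cycle
      (G := SimpleGraph.fromEdgeSet (C : Set (Sym2 V))) (v := x) (w := y)).2
      ⟨v, w.transfer _ hallC, hcyc', hmem'⟩
  obtain ⟨q, hq⟩ := (SimpleGraph.reachable_delete_edges_iff_exists_walk).1 hreach.2
  -- transfer q to fromEdgeSet τ
  have hqτ : ∀ f ∈ q.edges, f ∈ (SimpleGraph.fromEdgeSet (τ : Set (Sym2 V))).edgeSet := by
    intro f hf
    rw [edgeSet_eq hτE]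
    have hfC : f ∈ C := by
      have := q.edges_subset_edgeSet hf
      rw [SimpleGraph.edgeSet_fromEdgeSet] at this
      exact this.1
    have hfe : f ≠ s(x, y) := fun h => hq (h ▸ hf)
    exact hBτ (Finset.mem_erase.2 ⟨hfe, hfC⟩)
  set q' := q.transfer _ hqτ with hq'def
  have hxny : x ≠ y := hadj.ne
  have hxs : x ∈ supp τ := start_mem_supp q' hxny
  have hys : y ∈ supp τ := start_mem_supp q'.reverse hxny.symm
  have hein : s(x, y) ∈ edgesIn G (supp τ) \ τ := by
    rw [Finset.mem_sdiff]
    refine ⟨Finset.mem_filter.2 ⟨SimpleGraph.mem_edgeFinset.2 hadj, ?_⟩, heτ⟩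
    intro u hu
    rw [Sym2.mem_iff] at hu
    rcases hu with rfl | rfl
    · exact hxs
    · exact hys
  refine hA _ hein x y rfl q'.toPath q'.toPath.2 ?_
  intro f hf
  have : f ∈ q'.edges := q'.edges_toPath_subset hf
  rw [hq'def, SimpleGraph.Walk.edges_transfer] at this
  have hfC : f ∈ C := by
    have := q.edges_subset_edgeSet this
    rw [SimpleGraph.edgeSet_fromEdgeSet] at this
    exact this.1
  exact hmax f hfC

/-- For a nontrivial subtree `τ` of `G`, `μ(τ) = τ` iff no edge of `G|_{V_τ}` outside `τ` is
maximal on its fundamental cycle; equivalently, `τ` contains no broken circuit of `G`. -/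
theorem mu_fixed_iff_no_broken_circuit [Fintype V] [DecidableEq V] (G : SimpleGraph V)
    [DecidableRel G.Adj] [LinearOrder (Sym2 V)] (τ : Finset (Sym2 V))
    (hτE : τ ⊆ G.edgeFinset) (hne : τ.Nonempty) (hforest : IsForest τ)
    (hconn : ConnOn (supp τ) τ) :
    (mu G (supp τ) τ = τ ↔
      ∀ e ∈ edgesIn G (supp τ) \ τ, ∀ x y : V, e = s(x, y) →
        ∀ p : (SimpleGraph.fromEdgeSet (τ : Set (Sym2 V))).Walk x y, p.IsPath →
          ¬ (∀ f ∈ p.edges, f ≤ e)) ∧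
    (mu G (supp τ) τ = τ ↔ ∀ B, IsBrokenCircuit G B → ¬ B ⊆ τ) := by
  have h1 := test1 G τ hτE hforest hconn
  refine ⟨h1, h1.trans ?_⟩
  constructor
  · intro hA B hBr hBτ
    obtain ⟨C, e, hC, heC, hmax, hBe⟩ := hBr
    obtain ⟨v, w, hw, hwC⟩ := hC
    exact test G τ hτE hne hforest hconn hA B C e
      ⟨v, w, hw, (toFinset_congr _ _ _).trans hwC⟩ heC hmax
      (hBe.trans (erase_congr _ _ _ _)) hBτ
  · intro hB
    refine test2 G τ hτE ?_
    intro B C e hC heC hmax hBe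
    obtain ⟨v, w, hw, hwC⟩ := hC
    exact hB B ⟨C, e, ⟨v, w, hw, (toFinset_congr _ _ _).trans hwC⟩, heC, hmax,
      hBe.trans (erase_congr _ _ _ _)⟩


end BC
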